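/- arXiv:2410.22318 — 2 statements merged into one kernel-verified Lean document; each statement's English description precedes it below -/
import Mathlib

section
/- Let f: K → ℝ be an α-exp-concave function on a convex set K ⊆ ℝ, with |θ - β| ≤ D for all θ, β ∈ K and |f'(β)| ≤ G for all β ∈ K. Then for γ = (1/2)·min{1/(GD), α} and all θ, β ∈ K: f(θ) ≥ f(β) + f'(β)(θ - β) + (γ/2)·(f'(β))²·(θ - β)². -/
open Real Set

/-- Tangent line inequality for concave functions. -/
lemma concave_tangent_line {K : Set ℝ} {h : ℝ → ℝ} (hc : ConcaveOn ℝ K h)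
    {β h'β : ℝ} (hd : HasDerivWithinAt h h'β K β) (hβ : β ∈ K)
    {θ : ℝ} (hθ : θ ∈ K) : h θ ≤ h β + h'β * (θ - β) := by
  rcases lt_trichotomy θ β with hlt | heq | hgt
  · have hs := hc.le_slope_of_hasDerivWithinAt hθ hβ hlt hd
    rw [slope_def_field, le_div_iff₀ (by linarith)] at hs
    nlinarith
  · simp [heq]
  · have hs := hc.slope_le_of_hasDerivWithinAt hβ hθ hgt hd
    rw [slope_def_field, div_le_iff₀ (by linarith)] at hs
    nlinarith

/-- `log x ≤ (x - x⁻¹)/2` for `x ≥ 1`. -/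
lemma log_le_half_sub_inv {x : ℝ} (hx : 1 ≤ x) : Real.log x ≤ (x - x⁻¹) / 2 := by
  have hx0 : 0 < x := lt_of_lt_of_le one_pos hx
  have h1 : Real.log x ≤ Real.sinh (Real.log x) :=
    Real.self_le_sinh_iff.2 (Real.log_nonneg hx)
  rwa [Real.sinh_log hx0] at h1

/-- Key logarithm bound. -/
lemma log_key {z c : ℝ} (hz : z < 1) (hc : 0 ≤ c) (hc4 : c ≤ 1 / 4)
    (hcz : z < 0 → c * (1 - z) ≤ 1 / 2) :
    Real.log (1 - z) ≤ -z - c * z ^ 2 := by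
  rcases le_or_gt 0 z with hz0 | hz0
  · -- 0 ≤ z < 1, x := 1 - z ∈ (0,1]
    set x := 1 - z with hxdef
    have hx0 : 0 < x := by simp [hxdef]; linarith
    have hsq : Real.sqrt x ≤ 1 := by
      rw [show (1:ℝ) = Real.sqrt 1 by simp]
      exact Real.sqrt_le_sqrt (by linarith)
    have hsqx : Real.sqrt x * Real.sqrt x = x := Real.mul_self_sqrt hx0.le
    have hlog : Real.log x = 2 * Real.log (Real.sqrt x) := by
      rw [Real.log_sqrt hx0.le]; ring
    have h1 : Real.log (Real.sqrt x) ≤ Real.sqrt x - 1 :=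
      Real.log_le_sub_one_of_pos (Real.sqrt_pos.2 hx0)
    -- log x ≤ 2(√x - 1) = (x-1) - (√x -1)^2 ≤ (x-1) - (x-1)^2/4
    have key : (x - 1) ^ 2 / 4 ≤ (Real.sqrt x - 1) ^ 2 := by
      have h2 : x - 1 = (Real.sqrt x - 1) * (Real.sqrt x + 1) := by ring_nf; nlinarith
      rw [h2]; nlinarith [Real.sqrt_nonneg x]
    have : Real.log x ≤ (x - 1) - (x - 1) ^ 2 / 4 := by
      rw [hlog]; nlinarith
    have hcc : c * z ^ 2 ≤ z ^ 2 / 4 := by nlinarith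
    simp only [hxdef] at this
    nlinarith
  · -- z < 0, x := 1 - z > 1
    set x := 1 - z with hxdef
    have hx1 : 1 < x := by simp [hxdef]; linarith
    have hx0 : 0 < x := by linarith
    have h1 := log_le_half_sub_inv hx1.le
    have hcx : c * x ≤ 1 / 2 := hcz hz0
    -- (x - x⁻¹)/2 ≤ (x-1) - c (x-1)^2
    have h2 : (x - x⁻¹) / 2 ≤ (x - 1) - c * (x - 1) ^ 2 := by
      rw [div_le_iff₀ (by norm_num : (0:ℝ) < 2)]
      have hinv : x * x⁻¹ = 1 := mul_inv_cancel₀ hx0.ne'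
      nlinarith [sq_nonneg (x - 1), mul_pos hx0 hx0]
    have : Real.log x ≤ (x - 1) - c * (x - 1) ^ 2 := h1.trans h2
    simp only [hxdef] at this
    nlinarith

/-- If `f : K → ℝ` is α-exp-concave on a convex set `K ⊆ ℝ` with diameter at most `D`
and derivative bounded by `G`, then for `γ = (1/2)·min{1/(GD), α}` and all `θ, β ∈ K`:
`f θ ≥ f β + f'(β)(θ - β) + (γ/2)(f'(β))²(θ - β)²`. -/
theorem stmt_4 (K : Set ℝ) (hK : Convex ℝ K) (f f' : ℝ → ℝ) (α D G : ℝ)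
    (hα : 0 < α) (hD : 0 < D) (hG : 0 < G)
    (hexpconc : ConcaveOn ℝ K (fun θ => Real.exp (-α * f θ)))
    (hderiv : ∀ θ ∈ K, HasDerivWithinAt f (f' θ) K θ)
    (hdiam : ∀ θ ∈ K, ∀ β ∈ K, |θ - β| ≤ D)
    (hgrad : ∀ β ∈ K, |f' β| ≤ G) :
    ∀ θ ∈ K, ∀ β ∈ K,
      f θ ≥ f β + f' β * (θ - β) +
        ((1 / 2) * min (1 / (G * D)) α) / 2 * (f' β) ^ 2 * (θ - β) ^ 2 := by
  intro θ hθ β hβ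
  set γ : ℝ := (1 / 2) * min (1 / (G * D)) α with hγdef
  have hGD : 0 < G * D := mul_pos hG hD
  have hγpos : 0 < γ := by
    apply mul_pos (by norm_num)
    exact lt_min (by positivity) hα
  have hγα : γ ≤ α / 2 := by
    have := min_le_right (1 / (G * D)) α
    rw [hγdef]; linarith
  have hγGD : γ * (G * D) ≤ 1 / 2 := by
    have h1 : γ ≤ (1 / 2) * (1 / (G * D)) := by
      have := min_le_left (1 / (G * D)) α
      rw [hγdef]; nlinarith
    calc γ * (G * D) ≤ (1 / 2) * (1 / (G * D)) * (G * D) := by nlinarith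
      _ = 1 / 2 := by field_simp
  -- derivative of θ ↦ exp (-α * f θ) within K at β
  have hd : HasDerivWithinAt (fun θ => Real.exp (-α * f θ))
      (Real.exp (-α * f β) * (-α * f' β)) K β := by
    have h1 : HasDerivWithinAt (fun θ => -α * f θ) (-α * f' β) K β :=
      (hderiv β hβ).const_mul (-α)
    exact h1.exp
  have htang := concave_tangent_line hexpconc hd hβ hθ
  set z : ℝ := α * (f' β * (θ - β)) with hzdef
  have hEβ : (0:ℝ) < Real.exp (-α * f β) := Real.exp_pos _
  have hrhs : Real.exp (-α * f β) + Real.exp (-α * f β) * (-α * f' β) * (θ - β)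
      = Real.exp (-α * f β) * (1 - z) := by rw [hzdef]; ring
  rw [hrhs] at htang
  have hz1 : z < 1 := by
    by_contra hcon
    push_neg at hcon
    have : Real.exp (-α * f β) * (1 - z) ≤ 0 := by nlinarith
    exact absurd (lt_of_lt_of_le (Real.exp_pos _) (htang.trans this)) (by norm_num)
  -- |z| ≤ α * G * D
  have hzbound : |z| ≤ α * (G * D) := by
    rw [hzdef, abs_mul, abs_mul, abs_of_pos hα]
    have h1 := hgrad β hβ
    have h2 := hdiam θ hθ β hβ
    have := mul_le_mul h1 h2 (abs_nonneg _) hG.le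
    nlinarith
  -- take logs
  have hlog : -α * f θ ≤ -α * f β + Real.log (1 - z) := by
    have h1 : Real.log (Real.exp (-α * f θ)) ≤
        Real.log (Real.exp (-α * f β) * (1 - z)) :=
      Real.log_le_log (Real.exp_pos _) htang
    rwa [Real.log_exp, Real.log_mul hEβ.ne' (by linarith), Real.log_exp] at h1
  -- apply the log bound with c = γ / (2α)
  set c : ℝ := γ / (2 * α) with hcdef
  have hcpos : 0 ≤ c := by positivity
  have hc4 : c ≤ 1 / 4 := by
    rw [hcdef, div_le_iff₀ (by linarith)]
    linarith
  have hcz : z < 0 → c * (1 - z) ≤ 1 / 2 := by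
    intro hzneg
    have hzabs : -z ≤ α * (G * D) := by
      have := abs_le.1 hzbound; linarith [this.1]
    have h1 : c * (1 - z) = c + c * (-z) := by ring
    have h2 : c * (-z) ≤ c * (α * (G * D)) := by
      apply mul_le_mul_of_nonneg_left hzabs hcpos
    have h3 : c * (α * (G * D)) = γ * (G * D) / 2 := by
      rw [hcdef]; field_simp
    have h4 : c ≤ 1 / 4 := hc4
    rw [h1]
    rw [h3] at h2
    linarith
  have hkey := log_key hz1 hcpos hc4 hcz
  -- combine
  have hfinal : -α * f θ ≤ -α * f β + (-z - c * z ^ 2) := by linarith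
  have hczsq : c * z ^ 2 / α = γ / 2 * (f' β) ^ 2 * (θ - β) ^ 2 := by
    rw [hcdef, hzdef]; field_simp
  have h5 : f θ ≥ f β + z / α + c * z ^ 2 / α := by
    rw [ge_iff_le, ← sub_nonneg]
    have key : α * (f θ - (f β + z / α + c * z ^ 2 / α)) =
        (-α * f β + (-z - c * z ^ 2)) - (-α * f θ) := by
      field_simp; ring
    nlinarith [hfinal, hα]
  rw [hczsq] at h5
  have hz' : z / α = f' β * (θ - β) := by rw [hzdef]; field_simp
  rw [hz'] at h5
  calc f β + f' β * (θ - β) + γ / 2 * f' β ^ 2 * (θ - β) ^ 2 ≤ f θ := h5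
    _ = f θ := rfl
end

section
/- In the Online Newton Step one-dimensional update β_{t+1} = θ_t - (1/γ)·z_t/a_t followed by projection θ_{t+1} = proj_{K_{t+1}}(β_{t+1}) onto a convex interval K_{t+1} containing a fixed point θ*, the following holds: z_t(θ_t - θ*) ≤ (1/(2γ))·z_t²/a_t + (γ/2)(θ_t - θ*)²·a_t - (γ/2)(θ_{t+1} - θ*)²·a_t. -/
/-- One-dimensional ONS step: update `β' = θ - (1/γ)·z/a` and project onto a closed
interval `K` containing `θ*`. Then
`z(θ - θ*) ≤ (1/(2γ))·z²/a + (γ/2)(θ - θ*)²·a - (γ/2)(θ' - θ*)²·a`. -/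
theorem stmt_7 (γ a z θ θstar l r β' θ' : ℝ)
    (hγ : 0 < γ) (ha : 0 < a) (hlr : l ≤ r)
    (hθstar : θstar ∈ Set.Icc l r)
    (hβ' : β' = θ - z / (γ * a))
    (hθ'mem : θ' ∈ Set.Icc l r)
    (hproj : ∀ x ∈ Set.Icc l r, |θ' - β'| ≤ |x - β'|) :
    z * (θ - θstar) ≤
      1 / (2 * γ) * z ^ 2 / a + γ / 2 * (θ - θstar) ^ 2 * a
        - γ / 2 * (θ' - θstar) ^ 2 * a := by
  obtain ⟨hl', hr'⟩ := hθ'mem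
  obtain ⟨hls, hrs⟩ := hθstar
  have hsq : (θ' - θstar) ^ 2 ≤ (β' - θstar) ^ 2 := by
    rcases lt_trichotomy β' l with hb | hb | hb
    · have h := hproj l ⟨le_refl l, hlr⟩
      have hθ'l : θ' = l := by
        rw [abs_of_pos (by linarith), abs_of_pos (by linarith)] at h
        linarith
      subst hθ'l
      nlinarith
    · have h := hproj β' ⟨le_of_eq hb.symm, hb ▸ hlr⟩
      have : θ' = β' := by
        simpa [abs_nonpos_iff, sub_eq_zero] using h
      simp [this]
    · rcases le_or_gt β' r with hb2 | hb2
      · have h := hproj β' ⟨le_of_lt hb, hb2⟩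
        have : θ' = β' := by
          simpa [abs_nonpos_iff, sub_eq_zero] using h
        simp [this]
      · have h := hproj r ⟨hlr, le_refl r⟩
        have hθ'r : θ' = r := by
          rw [abs_of_neg (by linarith), abs_of_neg (by linarith)] at h
          linarith
        subst hθ'r
        nlinarith
  have hz : z = γ * a * (θ - β') := by
    field_simp at hβ' ⊢
    linarith
  have hγa : (0:ℝ) < γ * a := mul_pos hγ ha
  rw [hz]
  have key : γ * a * (θ - β') * (θ - θstar) =
      1 / (2 * γ) * (γ * a * (θ - β')) ^ 2 / a + γ / 2 * (θ - θstar) ^ 2 * a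
        - γ / 2 * (β' - θstar) ^ 2 * a := by
    field_simp
    ring
  rw [key]
  nlinarith [mul_pos hγ ha]
end
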